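/- Let G be a finite group, Q a 2-subgroup of G, and K a subgroup of G of odd order. Suppose every Sylow 2-subgroup of N_G(Q) is contained in N_G(K). Then the set QK is a subgroup of G, and QK is a perfect code of G if and only if Q is a perfect code of G. -/

import Mathlib

open Pointwise

/-- A subgroup `H` of `G` is a perfect code of `G` if there is a left transversal `T`
of `H` in `G` with `T = T⁻¹` and `1 ∈ T` (a Cayley transversal). -/
def IsPerfectCode {G : Type*} [Group G] (H : Subgroup G) : Prop :=
  ∃ T : Set G, (1 : G) ∈ T ∧ T⁻¹ = T ∧ ∀ g : G, ∃! t, t ∈ T ∧ g⁻¹ * t ∈ H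

namespace PCAux
variable {G : Type*} [Group G]

def dc (H : Subgroup G) (g : G) : Set G := {x | ∃ h₁ ∈ H, ∃ h₂ ∈ H, x = h₁ * g * h₂}

theorem self_mem_dc (H : Subgroup G) (g : G) : g ∈ dc H g :=
  ⟨1, H.one_mem, 1, H.one_mem, by group⟩

theorem dc_mul_right {H : Subgroup G} {g x h : G} (hx : x ∈ dc H g) (hh : h ∈ H) :
    x * h ∈ dc H g := by
  obtain ⟨h₁, h1m, h₂, h2m, rfl⟩ := hx
  exact ⟨h₁, h1m, h₂ * h, H.mul_mem h2m hh, by group⟩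

theorem inv_mem_dc_inv {H : Subgroup G} {g x : G} (hx : x ∈ dc H g) : x⁻¹ ∈ dc H g⁻¹ := by
  obtain ⟨h₁, h1m, h₂, h2m, rfl⟩ := hx
  exact ⟨h₂⁻¹, H.inv_mem h2m, h₁⁻¹, H.inv_mem h1m, by group⟩

theorem dc_eq_of_mem {H : Subgroup G} {g x : G} (hx : x ∈ dc H g) : dc H x = dc H g := by
  obtain ⟨h₁, h1m, h₂, h2m, rfl⟩ := hx
  ext y
  constructor
  · rintro ⟨a, ha, b, hb, rfl⟩
    exact ⟨a * h₁, H.mul_mem ha h1m, h₂ * b, H.mul_mem h2m hb, by group⟩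
  · rintro ⟨a, ha, b, hb, rfl⟩
    exact ⟨a * h₁⁻¹, H.mul_mem ha (H.inv_mem h1m), h₂⁻¹ * b, H.mul_mem (H.inv_mem h2m) hb,
      by group⟩

theorem dc_complete {H : Subgroup G} {g c e : G} (hc : c ∈ dc H g) (he : e ∈ dc H g⁻¹) :
    ∃ t : G, c⁻¹ * t ∈ H ∧ e⁻¹ * t⁻¹ ∈ H := by
  obtain ⟨h₁, h1m, h₂, h2m, rfl⟩ := hc
  obtain ⟨h₃, h3m, h₄, h4m, rfl⟩ := he
  refine ⟨h₁ * g * h₃⁻¹, ?_, ?_⟩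
  · have e1 : (h₁ * g * h₂)⁻¹ * (h₁ * g * h₃⁻¹) = h₂⁻¹ * h₃⁻¹ := by group
    rw [e1]; exact H.mul_mem (H.inv_mem h2m) (H.inv_mem h3m)
  · have e2 : (h₃ * g⁻¹ * h₄)⁻¹ * (h₁ * g * h₃⁻¹)⁻¹ = h₄⁻¹ * h₁⁻¹ := by group
    rw [e2]; exact H.mul_mem (H.inv_mem h4m) (H.inv_mem h1m)

theorem coset_trans {H : Subgroup G} {a b c : G} (h₁ : a⁻¹ * b ∈ H) (h₂ : b⁻¹ * c ∈ H) :
    a⁻¹ * c ∈ H := by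
  have h := H.mul_mem h₁ h₂
  rwa [show a⁻¹ * b * (b⁻¹ * c) = a⁻¹ * c by group] at h

theorem coset_symm {H : Subgroup G} {a b : G} (h : a⁻¹ * b ∈ H) : b⁻¹ * a ∈ H := by
  have h' := H.inv_mem h
  rwa [show (a⁻¹ * b)⁻¹ = b⁻¹ * a by group] at h'

theorem one_mem_dc {H : Subgroup G} {g : G} (h : (1 : G) ∈ dc H g) : g⁻¹ ∈ H := by
  obtain ⟨h₁, h1m, h₂, h2m, he⟩ := h
  have e : g⁻¹ = h₂ * (h₁ * g * h₂)⁻¹ * h₁ := by group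
  rw [← he] at e
  simp only [inv_one, mul_one, one_mul] at e
  rw [e]; exact H.mul_mem h2m h1m

theorem even_ncard_of_invol {α : Type*} (f : α → α) :
    ∀ n : ℕ, ∀ s : Set α, s.Finite → s.ncard = n → (∀ x ∈ s, f x ∈ s) →
      (∀ x ∈ s, f (f x) = x) → (∀ x ∈ s, f x ≠ x) → Even n := by
  intro n
  induction n using Nat.strong_induction_on with
  | _ n ih =>
    intro s hfin hcard hmap hinv hnf
    rcases Set.eq_empty_or_nonempty s with rfl | ⟨a, ha⟩
    · rw [Set.ncard_empty] at hcard; exact hcard ▸ Even.zero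
    · have hfa : f a ∈ s := hmap a ha
      have hne : a ≠ f a := fun h => hnf a ha h.symm
      have hpair : ({a, f a} : Set α) ⊆ s := by
        rintro x (rfl | rfl); exact ha; exact hfa
      set s' : Set α := s \ {a, f a} with hs'
      have hcard' : s'.ncard = n - 2 := by
        rw [hs', Set.ncard_diff hpair (Set.Finite.insert a (Set.finite_singleton (f a))),
          Set.ncard_pair hne, hcard]
      have hle : 2 ≤ n := by
        have := Set.ncard_le_ncard hpair hfin
        rw [Set.ncard_pair hne, hcard] at this; exact this
      have hlt : n - 2 < n := by omega
      have : Even (n - 2) := by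
        refine ih _ hlt s' (hfin.subset Set.diff_subset) hcard' ?_ ?_ ?_
        · rintro x ⟨hx, hx2⟩
          refine ⟨hmap x hx, ?_⟩
          simp only [Set.mem_insert_iff, Set.mem_singleton_iff] at hx2 ⊢
          push_neg at hx2 ⊢
          constructor
          · intro h
            have := hinv x hx
            rw [h] at this
            exact hx2.2 this.symm
          · intro h
            have := hinv x hx
            rw [h, hinv a ha] at this
            exact hx2.1 this.symm
        · exact fun x hx => hinv x hx.1
        · exact fun x hx => hnf x hx.1
      obtain ⟨k, hk⟩ := this
      exact ⟨k + 1, by omega⟩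

theorem exists_fixed_of_odd {α : Type*} (f : α → α) (s : Set α) (hfin : s.Finite)
    (hodd : Odd s.ncard) (hmap : ∀ x ∈ s, f x ∈ s) (hinv : ∀ x ∈ s, f (f x) = x) :
    ∃ x ∈ s, f x = x := by
  by_contra h
  push_neg at h
  have := even_ncard_of_invol f s.ncard s hfin rfl hmap hinv h
  exact (Nat.not_even_iff_odd.mpr hodd) this

theorem ncard_sat (H : Subgroup G) (S : Set G)
    (hsat : ∀ x ∈ S, ∀ h ∈ H, x * h ∈ S) :
    S.ncard = (QuotientGroup.mk (s := H) '' S).ncard * Nat.card H := by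
  rw [← Nat.card_coe_set_eq, ← Nat.card_coe_set_eq, ← Nat.card_prod]
  apply Nat.card_congr
  symm
  refine Equiv.ofBijective (fun p => ⟨(p.1 : G ⧸ H).out * (p.2 : G), ?_⟩) ⟨?_, ?_⟩
  · obtain ⟨⟨C, hC⟩, h⟩ := p
    obtain ⟨s, hs, hsC⟩ := hC
    have h1 : s⁻¹ * C.out ∈ H := by
      rw [← QuotientGroup.eq, hsC]
      exact C.out_eq'.symm
    have h2 : C.out ∈ S := by
      have := hsat s hs _ h1
      rwa [mul_inv_cancel_left] at this
    exact hsat _ h2 _ h.2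
  · rintro ⟨⟨C, hC⟩, h⟩ ⟨⟨C', hC'⟩, h'⟩ heq
    simp only [Subtype.mk_eq_mk] at heq
    have hmk : C = C' := by
      have e1 : QuotientGroup.mk (s := H) (C.out * h) = C := by
        rw [QuotientGroup.mk_mul_of_mem _ h.2]; exact QuotientGroup.out_eq' C
      have e2 : QuotientGroup.mk (s := H) (C'.out * h') = C' := by
        rw [QuotientGroup.mk_mul_of_mem _ h'.2]; exact QuotientGroup.out_eq' C'
      rw [← e1, ← e2, heq]
    subst hmk
    have : (h : G) = (h' : G) := mul_left_cancel heq
    rw [Prod.ext_iff]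
    exact ⟨Subtype.ext rfl, Subtype.ext this⟩
  · rintro ⟨x, hx⟩
    refine ⟨⟨⟨QuotientGroup.mk x, ⟨x, hx, rfl⟩⟩, ⟨(QuotientGroup.mk (s := H) x).out⁻¹ * x, ?_⟩⟩, ?_⟩
    · rw [← QuotientGroup.eq]
      exact (QuotientGroup.mk (s := H) x).out_eq'
    · simp only [Subtype.mk_eq_mk]
      rw [mul_inv_cancel_left]

/-- Sufficiency: the double-coset criterion implies the existence of a Cayley transversal. -/
theorem isPerfectCode_of_crit [Finite G] (H : Subgroup G)
    (crit : ∀ g : G, g⁻¹ ∈ dc H g →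
      Odd ((QuotientGroup.mk (s := H) '' dc H g).ncard) → ∃ x ∈ dc H g, x * x = 1) :
    IsPerfectCode H := by
  classical
  set Valid : Set G → Prop := fun P =>
    (1 : G) ∈ P ∧ (∀ x ∈ P, x⁻¹ ∈ P) ∧ ∀ x ∈ P, ∀ y ∈ P, x⁻¹ * y ∈ H → x = y with hValidDef
  have hValid1 : Valid {1} := by
    refine ⟨Set.mem_singleton 1, ?_, ?_⟩
    · rintro x rfl; simp
    · rintro x rfl y rfl _; rfl
  set A : Set ℕ := {n | ∃ P : Set G, Valid P ∧ P.ncard = n} with hA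
  have hAne : A.Nonempty := ⟨1, {1}, hValid1, Set.ncard_singleton 1⟩
  have hAbdd : BddAbove A := by
    refine ⟨Nat.card G, ?_⟩
    rintro n ⟨P, _, rfl⟩
    have := Set.ncard_le_ncard (Set.subset_univ P) (Set.toFinite _)
    rwa [Set.ncard_univ] at this
  obtain ⟨P, hPv, hPcard⟩ := Nat.sSup_mem hAne hAbdd
  obtain ⟨h1P, hinvP, huniq⟩ := hPv
  have hmax : ∀ P' : Set G, Valid P' → P'.ncard ≤ P.ncard := by
    intro P' h
    rw [hPcard]
    exact le_csSup hAbdd ⟨P', h, rfl⟩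
  have hcover : ∀ g : G, ∃ p ∈ P, g⁻¹ * p ∈ H := by
    by_contra hcon
    push_neg at hcon
    obtain ⟨g, hunc⟩ := hcon
    have hD1 : (1 : G) ∉ dc H g := by
      intro h
      exact hunc 1 h1P (by rw [mul_one]; exact one_mem_dc h)
    have hinj : Set.InjOn (QuotientGroup.mk (s := H)) P := fun x hx y hy hxy =>
      huniq x hx y hy (QuotientGroup.eq.mp hxy)
    by_cases hc1 : ∃ e, e ∈ dc H g⁻¹ ∧ (∀ p ∈ P, e⁻¹ * p ∉ H) ∧ g⁻¹ * e ∉ H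
    · -- Case 1 : extend by a fresh pair
      obtain ⟨e, heD', hencov, hegH⟩ := hc1
      obtain ⟨t, htg, hte⟩ := dc_complete (self_mem_dc H g) heD'
      have htP : t ∉ P := fun h => hunc t h htg
      have htinvP : t⁻¹ ∉ P := fun h => hencov t⁻¹ h hte
      have htt : t ≠ t⁻¹ := by
        intro h
        apply hegH
        have h1 : e⁻¹ * t ∈ H := by rw [h]; exact hte
        exact coset_trans htg (coset_symm h1)
      have hval : Valid (insert t (insert t⁻¹ P)) := by
        refine ⟨Or.inr (Or.inr h1P), ?_, ?_⟩
        · rintro x (rfl | rfl | hx)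
          · exact Or.inr (Or.inl rfl)
          · exact Or.inl (inv_inv t)
          · exact Or.inr (Or.inr (hinvP x hx))
        · rintro x (rfl | rfl | hx) y (rfl | rfl | hy) hxy
          · rfl
          · exact absurd (coset_trans htg (coset_trans hxy (coset_symm hte))) hegH
          · exact absurd (coset_trans htg hxy) (hunc y hy)
          · exact absurd (coset_trans htg (coset_trans (coset_symm hxy) (coset_symm hte))) hegH
          · rfl
          · exact absurd (coset_trans hte hxy) (hencov y hy)
          · exact absurd (coset_trans htg (coset_symm hxy)) (hunc x hx)
          · exact absurd (coset_trans hte (coset_symm hxy)) (hencov x hx)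
          · exact huniq x hx y hy hxy
      have hcard : (insert t (insert t⁻¹ P)).ncard = P.ncard + 2 := by
        rw [Set.ncard_insert_of_notMem (by
            rintro (h | h)
            · exact htt h
            · exact htP h) (Set.toFinite _),
          Set.ncard_insert_of_notMem htinvP (Set.toFinite _)]
      have := hmax _ hval
      omega
    · -- Case 2
      have hctot : ∀ e, e ∈ dc H g⁻¹ → (∀ p ∈ P, e⁻¹ * p ∉ H) → g⁻¹ * e ∈ H := by
        intro e he hnc
        by_contra hne
        exact hc1 ⟨e, he, hnc, hne⟩
      -- First : g must lie in dc H g⁻¹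
      have hgD' : g ∈ dc H g⁻¹ := by
        by_contra hgD'
        have hcov' : ∀ e ∈ dc H g⁻¹, ∃ p ∈ P, e⁻¹ * p ∈ H := by
          intro e he
          by_contra hne
          push_neg at hne
          have hge := hctot e he hne
          have h2 := dc_mul_right he (coset_symm hge)
          rw [mul_inv_cancel_left] at h2
          exact hgD' h2
        set Pc' := P ∩ dc H g⁻¹ with hPc'
        set Pc := P ∩ dc H g with hPc
        have himg' : QuotientGroup.mk (s := H) '' Pc' = QuotientGroup.mk (s := H) '' dc H g⁻¹ := by
          apply Set.Subset.antisymm (Set.image_mono Set.inter_subset_right)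
          rintro C ⟨e, he, rfl⟩
          obtain ⟨p, hp, hep⟩ := hcov' e he
          have hpD : p ∈ dc H g⁻¹ := by
            have h2 := dc_mul_right he hep; rwa [mul_inv_cancel_left] at h2
          exact (Set.mem_image _ _ _).mpr ⟨p, ⟨hp, hpD⟩, (QuotientGroup.eq.mpr hep).symm⟩
        have hcn1 : Pc'.ncard = (QuotientGroup.mk (s := H) '' dc H g⁻¹).ncard := by
          rw [← himg', Set.ncard_image_of_injOn (hinj.mono Set.inter_subset_left)]
        have hinvimg : (fun x : G => x⁻¹) '' Pc' = Pc := by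
          apply Set.Subset.antisymm
          · rintro x ⟨y, ⟨hyP, hyD⟩, rfl⟩
            refine ⟨hinvP y hyP, ?_⟩
            have := inv_mem_dc_inv hyD
            rwa [inv_inv] at this
          · rintro x ⟨hxP, hxD⟩
            exact ⟨x⁻¹, ⟨hinvP x hxP, inv_mem_dc_inv hxD⟩, inv_inv x⟩
        have hcn2 : Pc.ncard = Pc'.ncard := by
          rw [← hinvimg, Set.ncard_image_of_injective _ inv_injective]
        have hsub : QuotientGroup.mk (s := H) '' Pc ⊆
            (QuotientGroup.mk (s := H) '' dc H g) \ {QuotientGroup.mk (s := H) g} := by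
          rintro C ⟨p, ⟨hpP, hpD⟩, rfl⟩
          refine ⟨(Set.mem_image _ _ _).mpr ⟨p, hpD, rfl⟩, ?_⟩
          simp only [Set.mem_singleton_iff]
          intro hCg
          exact hunc p hpP (QuotientGroup.eq.mp hCg.symm)
        have hcn3 : Pc.ncard ≤ (QuotientGroup.mk (s := H) '' dc H g).ncard - 1 := by
          have h4 := Set.ncard_le_ncard hsub (Set.toFinite _)
          rwa [Set.ncard_diff_singleton_of_mem ((Set.mem_image _ _ _).mpr ⟨g, self_mem_dc H g, rfl⟩),
            Set.ncard_image_of_injOn (hinj.mono Set.inter_subset_left)] at h4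
        have hinvD : (fun x : G => x⁻¹) '' dc H g = dc H g⁻¹ := by
          apply Set.Subset.antisymm
          · rintro x ⟨y, hy, rfl⟩
            exact inv_mem_dc_inv hy
          · rintro x hx
            have := inv_mem_dc_inv hx
            rw [inv_inv] at this
            exact ⟨x⁻¹, this, inv_inv x⟩
        have hDcard : (dc H g⁻¹).ncard = (dc H g).ncard := by
          rw [← hinvD, Set.ncard_image_of_injective _ inv_injective]
        have e1 := ncard_sat H (dc H g) (fun x hx h hh => dc_mul_right hx hh)
        have e2 := ncard_sat H (dc H g⁻¹) (fun x hx h hh => dc_mul_right hx hh)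
        have hHpos : 0 < Nat.card H := Nat.card_pos
        have hmeq : (QuotientGroup.mk (s := H) '' dc H g).ncard =
            (QuotientGroup.mk (s := H) '' dc H g⁻¹).ncard := by
          apply Nat.eq_of_mul_eq_mul_right hHpos
          rw [← e1, ← e2, hDcard]
        have hpos : 0 < (QuotientGroup.mk (s := H) '' dc H g).ncard := by
          rw [Set.ncard_pos (Set.toFinite _)]
          exact ⟨QuotientGroup.mk g, (Set.mem_image _ _ _).mpr ⟨g, self_mem_dc H g, rfl⟩⟩
        omega
      have hDD' : dc H g = dc H g⁻¹ := dc_eq_of_mem hgD'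
      have hginvD : g⁻¹ ∈ dc H g := by
        have := inv_mem_dc_inv hgD'
        rwa [inv_inv] at this
      set Pc := P ∩ dc H g with hPc
      have himg : QuotientGroup.mk (s := H) '' Pc =
          (QuotientGroup.mk (s := H) '' dc H g) \ {QuotientGroup.mk (s := H) g} := by
        apply Set.Subset.antisymm
        · rintro C ⟨p, ⟨hpP, hpD⟩, rfl⟩
          refine ⟨(Set.mem_image _ _ _).mpr ⟨p, hpD, rfl⟩, ?_⟩
          simp only [Set.mem_singleton_iff]
          intro hCg
          exact hunc p hpP (QuotientGroup.eq.mp hCg.symm)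
        · rintro C ⟨⟨e, heD, rfl⟩, hCne⟩
          simp only [Set.mem_singleton_iff] at hCne
          by_cases hecov : ∃ p ∈ P, e⁻¹ * p ∈ H
          · obtain ⟨p, hp, hep⟩ := hecov
            have hpD : p ∈ dc H g := by
              have h2 := dc_mul_right heD hep; rwa [mul_inv_cancel_left] at h2
            exact (Set.mem_image _ _ _).mpr ⟨p, ⟨hp, hpD⟩, (QuotientGroup.eq.mpr hep).symm⟩
          · push_neg at hecov
            have := hctot e (hDD' ▸ heD) hecov
            exact absurd (QuotientGroup.eq.mpr this).symm hCne
      have hcardPc : Pc.ncard = (QuotientGroup.mk (s := H) '' dc H g).ncard - 1 := by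
        rw [← Set.ncard_image_of_injOn (hinj.mono Set.inter_subset_left), himg,
          Set.ncard_diff_singleton_of_mem ((Set.mem_image _ _ _).mpr ⟨g, self_mem_dc H g, rfl⟩)]
      have hposm : 0 < (QuotientGroup.mk (s := H) '' dc H g).ncard := by
        rw [Set.ncard_pos (Set.toFinite _)]
        exact ⟨QuotientGroup.mk g, (Set.mem_image _ _ _).mpr ⟨g, self_mem_dc H g, rfl⟩⟩
      by_cases hinv2 : ∃ p ∈ Pc, p⁻¹ = p
      · -- Case 2b-i : an involution represents some coset of D; swap it out
        obtain ⟨p, ⟨hpP, hpD⟩, hpinv⟩ := hinv2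
        have hpD' : p ∈ dc H g⁻¹ := hDD' ▸ hpD
        obtain ⟨t, htg, htp⟩ := dc_complete (self_mem_dc H g) hpD'
        have htP : t ∉ P := fun h => hunc t h htg
        have hgp : g⁻¹ * p ∉ H := hunc p hpP
        have htt : t ≠ t⁻¹ := by
          intro h
          apply hgp
          have h1 : p⁻¹ * t ∈ H := by rw [h]; exact htp
          exact coset_trans htg (coset_symm h1)
        have hp1 : p ≠ 1 := by
          rintro rfl
          exact hD1 hpD
        have hval : Valid (insert t (insert t⁻¹ (P \ {p}))) := by
          refine ⟨Or.inr (Or.inr ⟨h1P, fun h => hp1 (Set.mem_singleton_iff.mp h).symm⟩), ?_, ?_⟩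
          · rintro x (rfl | rfl | ⟨hxP, hxp⟩)
            · exact Or.inr (Or.inl rfl)
            · exact Or.inl (inv_inv t)
            · refine Or.inr (Or.inr ⟨hinvP x hxP, ?_⟩)
              simp only [Set.mem_singleton_iff] at hxp ⊢
              intro h
              apply hxp
              rw [← inv_inv x, h, hpinv]
          · rintro x (rfl | rfl | ⟨hxP, hxp⟩) y (rfl | rfl | ⟨hyP, hyp⟩) hxy
            · rfl
            · exact absurd (coset_trans htg (coset_trans hxy (coset_symm htp))) hgp
            · exact absurd (coset_trans htg hxy) (hunc y hyP)
            · exact absurd (coset_trans htg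
                (coset_trans (coset_symm hxy) (coset_symm htp))) hgp
            · rfl
            · exact absurd (Set.mem_singleton_iff.mpr
                (huniq p hpP y hyP (coset_trans htp hxy)).symm) hyp
            · exact absurd (coset_trans htg (coset_symm hxy)) (hunc x hxP)
            · exact absurd (Set.mem_singleton_iff.mpr
                (huniq p hpP x hxP (coset_trans htp (coset_symm hxy))).symm) hxp
            · exact huniq x hxP y hyP hxy
        have hc1' : t⁻¹ ∉ P \ {p} := by
          rintro ⟨hyP, hyp⟩
          exact hyp (Set.mem_singleton_iff.mpr (huniq p hpP t⁻¹ hyP htp).symm)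
        have hc2' : t ∉ insert t⁻¹ (P \ {p}) := by
          rintro (h | ⟨h, _⟩)
          · exact htt h
          · exact htP h
        have hPpos : 0 < P.ncard := (Set.ncard_pos (Set.toFinite _)).mpr ⟨1, h1P⟩
        have hcard : (insert t (insert t⁻¹ (P \ {p}))).ncard = P.ncard + 1 := by
          rw [Set.ncard_insert_of_notMem hc2' (Set.toFinite _),
            Set.ncard_insert_of_notMem hc1' (Set.toFinite _),
            Set.ncard_diff_singleton_of_mem hpP]
          omega
        have := hmax _ hval
        omega
      · -- Case 2b-ii : no involution in P ∩ D, so the count is odd and crit applies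
        push_neg at hinv2
        have heven : Even Pc.ncard := by
          refine even_ncard_of_invol (fun x => x⁻¹) Pc.ncard Pc (Set.toFinite _) rfl ?_ ?_ ?_
          · rintro x ⟨hxP, hxD⟩
            refine ⟨hinvP x hxP, ?_⟩
            have := inv_mem_dc_inv hxD
            rwa [← hDD'] at this
          · exact fun x _ => inv_inv x
          · exact fun x hx => hinv2 x hx
        have hmodd : Odd ((QuotientGroup.mk (s := H) '' dc H g).ncard) := by
          obtain ⟨k, hk⟩ := heven
          exact ⟨k, by omega⟩
        obtain ⟨x₀, hx0D, hx0sq⟩ := crit g hginvD hmodd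
        have hx0inv : x₀⁻¹ = x₀ := inv_eq_of_mul_eq_one_right hx0sq
        by_cases hx0g : g⁻¹ * x₀ ∈ H
        · -- x₀ lies in the uncovered coset : just insert it
          have hx0P : x₀ ∉ P := fun h => hunc x₀ h hx0g
          have hval : Valid (insert x₀ P) := by
            refine ⟨Or.inr h1P, ?_, ?_⟩
            · rintro x (rfl | hx)
              · exact Or.inl hx0inv
              · exact Or.inr (hinvP x hx)
            · rintro x (rfl | hx) y (rfl | hy) hxy
              · rfl
              · exact absurd (coset_trans hx0g hxy) (hunc y hy)
              · exact absurd (coset_trans hx0g (coset_symm hxy)) (hunc x hx)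
              · exact huniq x hx y hy hxy
          have hcard : (insert x₀ P).ncard = P.ncard + 1 :=
            Set.ncard_insert_of_notMem hx0P (Set.toFinite _)
          have := hmax _ hval
          omega
        · -- x₀'s coset is represented by some non-involution p : rearrange
          have hx0cov : ∃ p ∈ P, x₀⁻¹ * p ∈ H := by
            by_contra hne
            push_neg at hne
            exact hx0g (hctot x₀ (hDD' ▸ hx0D) hne)
          obtain ⟨p, hpP, hpx0⟩ := hx0cov
          have hpD : p ∈ dc H g := by
            have h2 := dc_mul_right hx0D hpx0
            rwa [mul_inv_cancel_left] at h2
          have hpinvP : p⁻¹ ∈ P := hinvP p hpP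
          have hpne : p⁻¹ ≠ p := hinv2 p ⟨hpP, hpD⟩
          have hpp : p * p ∉ H := fun h =>
            hpne (huniq p⁻¹ hpinvP p hpP (by rw [inv_inv]; exact h))
          obtain ⟨t, htg, htp⟩ := dc_complete (self_mem_dc H g) (inv_mem_dc_inv hpD)
          have htp' : p * t⁻¹ ∈ H := by rwa [inv_inv] at htp
          have htP : t ∉ P := fun h => hunc t h htg
          have hgp : g⁻¹ * p ∉ H := hunc p hpP
          have hgpinv : g⁻¹ * p⁻¹ ∉ H := hunc p⁻¹ hpinvP
          have htt : t ≠ t⁻¹ := by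
            intro h
            apply hgpinv
            have h1 : (p⁻¹)⁻¹ * t ∈ H := by rw [inv_inv, h]; exact htp'
            exact coset_trans htg (coset_symm h1)
          have hx0t : x₀ ≠ t := by
            rintro rfl
            exact hx0g htg
          have hx0t' : x₀ ≠ t⁻¹ := by
            intro h
            apply hpp
            have h1 : t * p ∈ H := by
              rw [h] at hpx0
              rwa [inv_inv] at hpx0
            have h2 := H.mul_mem htp' h1
            rwa [show p * t⁻¹ * (t * p) = p * p by group] at h2
          have hx0Pd : x₀ ∉ P \ {p, p⁻¹} := by
            rintro ⟨hyP, hyn⟩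
            exact hyn (Or.inl (huniq x₀ hyP p hpP hpx0))
          have htPd : t ∉ P \ {p, p⁻¹} := fun h => htP h.1
          have htinvPd : t⁻¹ ∉ P \ {p, p⁻¹} := by
            rintro ⟨hyP, hyn⟩
            exact hyn (Or.inr (huniq p⁻¹ hpinvP t⁻¹ hyP htp).symm)
          have hp1 : (1 : G) ∈ P \ {p, p⁻¹} := by
            refine ⟨h1P, ?_⟩
            rintro (rfl | h)
            · exact hD1 hpD
            · rw [Set.mem_singleton_iff] at h
              apply hD1
              have hp1' : p = 1 := by rw [← inv_inv p, ← h, inv_one]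
              rwa [hp1'] at hpD
          -- note : p⁻¹ = 1 → p = 1 handled above
          have hval : Valid (insert x₀ (insert t (insert t⁻¹ (P \ {p, p⁻¹})))) := by
            refine ⟨Or.inr (Or.inr (Or.inr hp1)), ?_, ?_⟩
            · rintro x (rfl | rfl | rfl | ⟨hxP, hxn⟩)
              · exact Or.inl hx0inv
              · exact Or.inr (Or.inr (Or.inl rfl))
              · exact Or.inr (Or.inl (inv_inv t))
              · refine Or.inr (Or.inr (Or.inr ⟨hinvP x hxP, ?_⟩))
                rintro (h | h)
                · exact hxn (Or.inr (Set.mem_singleton_iff.mpr (by rw [← inv_inv x, h])))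
                · rw [Set.mem_singleton_iff] at h
                  exact hxn (Or.inl (by rw [← inv_inv x, h, inv_inv]))
            · rintro x (rfl | rfl | rfl | ⟨hxP, hxn⟩) y (rfl | rfl | rfl | ⟨hyP, hyn⟩) hxy
              · rfl
              · -- (x₀, t)
                exact absurd (coset_trans htg (coset_symm hxy)) hx0g
              · -- (x₀, t⁻¹)
                exfalso
                apply hpp
                have h3 := coset_trans (coset_trans htp (coset_symm hxy)) hpx0
                rwa [inv_inv] at h3
              · -- (x₀, y)
                exact absurd (huniq y hyP p hpP (coset_trans (coset_symm hxy) hpx0))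
                  (fun h => hyn (Or.inl h))
              · -- (t, x₀)
                exact absurd (coset_trans htg hxy) hx0g
              · rfl
              · -- (t, t⁻¹)
                exact absurd (coset_trans (coset_trans htg hxy) (coset_symm htp)) hgpinv
              · -- (t, y)
                exact absurd (coset_trans htg hxy) (hunc y hyP)
              · -- (t⁻¹, x₀)
                exfalso
                apply hpp
                have h3 := coset_trans (coset_trans htp hxy) hpx0
                rwa [inv_inv] at h3
              · -- (t⁻¹, t)
                exact absurd (coset_trans (coset_trans htg (coset_symm hxy))
                  (coset_symm htp)) hgpinv
              · rfl
              · -- (t⁻¹, y)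
                exact absurd (huniq p⁻¹ hpinvP y hyP (coset_trans htp hxy))
                  (fun h => hyn (Or.inr h.symm))
              · -- (y, x₀)
                exact absurd (huniq x hxP p hpP (coset_trans hxy hpx0))
                  (fun h => hxn (Or.inl h))
              · -- (y, t)
                exact absurd (coset_trans htg (coset_symm hxy)) (hunc x hxP)
              · -- (y, t⁻¹)
                exact absurd (huniq p⁻¹ hpinvP x hxP (coset_trans htp (coset_symm hxy)))
                  (fun h => hxn (Or.inr h.symm))
              · exact huniq x hxP y hyP hxy
          have hpairP : ({p, p⁻¹} : Set G) ⊆ P := by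
            rintro x (rfl | h)
            · exact hpP
            · rw [Set.mem_singleton_iff] at h; rw [h]; exact hpinvP
          have hP2 : 2 ≤ P.ncard := by
            have := Set.ncard_le_ncard hpairP (Set.toFinite _)
            rwa [Set.ncard_pair (fun h => hpne h.symm)] at this
          have hcard : (insert x₀ (insert t (insert t⁻¹ (P \ {p, p⁻¹})))).ncard
              = P.ncard + 1 := by
            rw [Set.ncard_insert_of_notMem (by
                rintro (h | h | h)
                · exact hx0t h
                · exact hx0t' h
                · exact hx0Pd h) (Set.toFinite _),
              Set.ncard_insert_of_notMem (by
                rintro (h | h)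
                · exact htt h
                · exact htPd h) (Set.toFinite _),
              Set.ncard_insert_of_notMem htinvPd (Set.toFinite _),
              Set.ncard_diff hpairP (Set.toFinite _),
              Set.ncard_pair (fun h => hpne h.symm)]
            omega
          have := hmax _ hval
          omega
  -- Build the perfect code from the maximal system
  refine ⟨P, h1P, ?_, ?_⟩
  · ext x
    simp only [Set.mem_inv]
    constructor
    · intro hx
      have := hinvP _ hx
      rwa [inv_inv] at this
    · exact fun hx => hinvP x hx
  · intro g
    obtain ⟨p, hp, hgp⟩ := hcover g
    refine ⟨p, ⟨hp, hgp⟩, ?_⟩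
    rintro y ⟨hyP, hgy⟩
    exact huniq y hyP p hp (coset_trans (coset_symm hgy) hgp)
-- PART 5 : group theory assembly (to be appended inside namespace PCAux)

/-- Transversal parity: a Cayley transversal of `H` meets an inverse-closed union of
left cosets of odd count in an element of square one. -/
theorem exists_sq_one_of_isPerfectCode [Finite G] (H : Subgroup G) (hPC : IsPerfectCode H)
    (S : Set G) (hsat : ∀ x ∈ S, ∀ h ∈ H, x * h ∈ S) (hSinv : ∀ x ∈ S, x⁻¹ ∈ S)
    (hodd : Odd ((QuotientGroup.mk (s := H) '' S).ncard)) : ∃ x ∈ S, x * x = 1 := by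
  obtain ⟨T, h1T, hTinv, hT⟩ := hPC
  have hmemT : ∀ x ∈ T, x⁻¹ ∈ T := by
    intro x hx
    rw [← hTinv]
    simpa using hx
  have hTuniq : ∀ t₁ ∈ T, ∀ t₂ ∈ T, t₁⁻¹ * t₂ ∈ H → t₁ = t₂ := by
    intro t₁ ht₁ t₂ ht₂ h12
    exact (hT t₁).unique ⟨ht₁, by rw [inv_mul_cancel]; exact H.one_mem⟩ ⟨ht₂, h12⟩
  have himg : QuotientGroup.mk (s := H) '' (T ∩ S) = QuotientGroup.mk (s := H) '' S := by
    apply Set.Subset.antisymm (Set.image_mono Set.inter_subset_right)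
    rintro C ⟨e, he, rfl⟩
    obtain ⟨t, ⟨htT, het⟩, -⟩ := hT e
    have htS : t ∈ S := by
      have := hsat e he _ het
      rwa [mul_inv_cancel_left] at this
    exact (Set.mem_image _ _ _).mpr ⟨t, ⟨htT, htS⟩, (QuotientGroup.eq.mpr het).symm⟩
  have hinj : Set.InjOn (QuotientGroup.mk (s := H)) (T ∩ S) := fun x hx y hy hxy =>
    hTuniq x hx.1 y hy.1 (QuotientGroup.eq.mp hxy)
  have hcnt : (T ∩ S).ncard = (QuotientGroup.mk (s := H) '' S).ncard := by
    rw [← himg, Set.ncard_image_of_injOn hinj]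
  obtain ⟨x, hxTS, hfix⟩ := exists_fixed_of_odd (fun x => x⁻¹) (T ∩ S) (Set.toFinite _)
    (by rwa [hcnt]) (fun x hx => ⟨hmemT x hx.1, hSinv x hx.2⟩) (fun x _ => inv_inv x)
  exact ⟨x, hxTS.2, mul_eq_one_iff_eq_inv.mpr hfix.symm⟩

/-- Elementwise 2-power property from being a 2-subgroup. -/
theorem pow_two_eq_one_of_mem {Q : Subgroup G} (hQ : IsPGroup 2 Q) {x : G} (hx : x ∈ Q) :
    ∃ n : ℕ, x ^ 2 ^ n = 1 := by
  obtain ⟨n, hn⟩ := hQ ⟨x, hx⟩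
  refine ⟨n, ?_⟩
  have := Subtype.ext_iff.mp hn
  simpa using this

/-- Any 2-subgroup of the normalizer of `Q` normalizes `K`, given the Sylow hypothesis. -/
theorem le_K_normalizer {Q K : Subgroup G} [Finite G]
    (hSyl : ∀ P : Sylow 2 (Subgroup.normalizer (Q : Set G)),
      ((P : Subgroup (Subgroup.normalizer (Q : Set G))).map (Subgroup.normalizer (Q : Set G)).subtype) ≤ (Subgroup.normalizer (K : Set G)))
    (V : Subgroup G) (hVN : V ≤ (Subgroup.normalizer (Q : Set G))) (hV : IsPGroup 2 V) : V ≤ (Subgroup.normalizer (K : Set G)) := by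
  have hV' : IsPGroup 2 (V.subgroupOf (Subgroup.normalizer (Q : Set G))) := by
    intro x
    have hmem : ((x : (Subgroup.normalizer (Q : Set G))) : G) ∈ V := Subgroup.mem_subgroupOf.mp x.2
    obtain ⟨k, hk⟩ := hV ⟨((x : (Subgroup.normalizer (Q : Set G))) : G), hmem⟩
    refine ⟨k, ?_⟩
    have hG : ((x : (Subgroup.normalizer (Q : Set G))) : G) ^ 2 ^ k = 1 := by
      have := Subtype.ext_iff.mp hk
      simpa using this
    apply Subtype.ext
    apply Subtype.ext
    simpa using hG
  obtain ⟨Psyl, hle⟩ := hV'.exists_le_sylow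
  intro v hv
  have h2 : (⟨v, hVN hv⟩ : (Subgroup.normalizer (Q : Set G))) ∈ (Psyl : Subgroup (Subgroup.normalizer (Q : Set G))) :=
    hle (Subgroup.mem_subgroupOf.mpr hv)
  exact hSyl Psyl ⟨⟨v, hVN hv⟩, h2, rfl⟩

/-- The subgroup `QK`, given that `Q` normalizes `K`. -/
def JQK (Q K : Subgroup G) (hQK : Q ≤ (Subgroup.normalizer (K : Set G))) : Subgroup G where
  carrier := (Q : Set G) * (K : Set G)
  one_mem' := ⟨1, Q.one_mem, 1, K.one_mem, mul_one 1⟩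
  mul_mem' := by
    rintro a b ⟨q, hq, k, hk, rfl⟩ ⟨q', hq', k', hk', rfl⟩
    refine ⟨q * q', Q.mul_mem hq hq', (q'⁻¹ * k * q') * k', K.mul_mem ?_ hk', by group⟩
    have := (Subgroup.mem_normalizer_iff.mp (hQK (Q.inv_mem hq'))) k
    rw [inv_inv] at this
    exact this.mp hk
  inv_mem' := by
    rintro a ⟨q, hq, k, hk, rfl⟩
    refine ⟨q⁻¹, Q.inv_mem hq, q * k⁻¹ * q⁻¹, ?_, by group⟩
    exact (Subgroup.mem_normalizer_iff.mp (hQK hq) k⁻¹).mp (K.inv_mem hk)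

/-- The subgroup `Q ∪ gQ` for `g` normalizing `Q` with `g² ∈ Q`. -/
def Vsub (Q : Subgroup G) (g : G) (hg2 : g * g ∈ Q)
    (hc1 : ∀ q ∈ Q, g⁻¹ * q * g ∈ Q) (hc2 : ∀ q ∈ Q, g * q * g⁻¹ ∈ Q) : Subgroup G where
  carrier := (Q : Set G) ∪ {x | ∃ q ∈ Q, x = g * q}
  one_mem' := Or.inl Q.one_mem
  mul_mem' := by
    rintro a b (ha | ⟨q, hq, rfl⟩) (hb | ⟨q', hq', rfl⟩)
    · exact Or.inl (Q.mul_mem ha hb)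
    · exact Or.inr ⟨(g⁻¹ * a * g) * q', Q.mul_mem (hc1 a ha) hq', by group⟩
    · exact Or.inr ⟨q * b, Q.mul_mem hq hb, by group⟩
    · refine Or.inl ?_
      have : g * q * (g * q') = (g * g) * (g⁻¹ * q * g) * q' := by group
      rw [this]
      exact Q.mul_mem (Q.mul_mem hg2 (hc1 q hq)) hq'
  inv_mem' := by
    rintro a (ha | ⟨q, hq, rfl⟩)
    · exact Or.inl (Q.inv_mem ha)
    · exact Or.inr ⟨(g * g)⁻¹ * (g * q⁻¹ * g⁻¹),
        Q.mul_mem (Q.inv_mem hg2) (hc2 q⁻¹ (Q.inv_mem hq)), by group⟩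

end PCAux

theorem perfect_code_QK {G : Type*} [Group G] [Finite G]
    (Q K : Subgroup G) (hQ : IsPGroup 2 Q) (hK : Odd (Nat.card K))
    (hSyl : ∀ P : Sylow 2 (Subgroup.normalizer (Q : Set G)),
      ((P : Subgroup (Subgroup.normalizer (Q : Set G))).map (Subgroup.normalizer (Q : Set G)).subtype) ≤ (Subgroup.normalizer (K : Set G))) :
    ∃ J : Subgroup G, (J : Set G) = (Q : Set G) * (K : Set G) ∧
      (IsPerfectCode J ↔ IsPerfectCode Q) := by
  classical
  haveI : Fact (Nat.Prime 2) := ⟨Nat.prime_two⟩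
  have hQN : Q ≤ (Subgroup.normalizer (K : Set G)) := PCAux.le_K_normalizer hSyl Q Subgroup.le_normalizer hQ
  set J : Subgroup G := PCAux.JQK Q K hQN with hJdef
  have hQJ : Q ≤ J := fun q hq => ⟨q, hq, 1, K.one_mem, mul_one q⟩
  have hKJ : K ≤ J := fun k hk => ⟨1, Q.one_mem, k, hk, one_mul k⟩
  have htriv : ∀ x : G, x ∈ Q → x ∈ K → x = 1 := by
    intro x hxQ hxK
    obtain ⟨n, hn⟩ := PCAux.pow_two_eq_one_of_mem hQ hxQ
    have h1 : orderOf x ∣ 2 ^ n := orderOf_dvd_of_pow_eq_one hn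
    have h2 : orderOf x ∣ Nat.card K := by
      have h3 := orderOf_dvd_natCard (⟨x, hxK⟩ : K)
      rwa [← orderOf_injective K.subtype K.subtype_injective ⟨x, hxK⟩] at h3
    have hcop : Nat.Coprime (2 ^ n) (Nat.card K) :=
      Nat.Coprime.pow_left n (Nat.coprime_two_left.mpr hK)
    have h4 := Nat.dvd_gcd h1 h2
    rw [Nat.Coprime.gcd_eq_one hcop] at h4
    exact orderOf_eq_one_iff.mp (Nat.dvd_one.mp h4)
  have hcardJ : Nat.card J = Nat.card Q * Nat.card K := by
    rw [← Nat.card_prod]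
    refine Nat.card_congr (Equiv.ofBijective
      (fun p : Q × K => (⟨(p.1 : G) * (p.2 : G), ⟨p.1, p.1.2, p.2, p.2.2, rfl⟩⟩ : J))
      ⟨?_, ?_⟩).symm
    · rintro ⟨⟨q, hq⟩, ⟨k, hk⟩⟩ ⟨⟨q', hq'⟩, ⟨k', hk'⟩⟩ heq
      simp only [Subtype.mk_eq_mk] at heq
      have hx : q'⁻¹ * q = k' * k⁻¹ := by
        have h5 : q'⁻¹ * (q * k) * k⁻¹ = q'⁻¹ * (q' * k') * k⁻¹ := by rw [show q * k = q' * k' from congrArg Subtype.val heq]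
        calc q'⁻¹ * q = q'⁻¹ * (q * k) * k⁻¹ := by group
          _ = q'⁻¹ * (q' * k') * k⁻¹ := h5
          _ = k' * k⁻¹ := by group
      have hone : q'⁻¹ * q = 1 :=
        htriv _ (Q.mul_mem (Q.inv_mem hq') hq) (hx ▸ K.mul_mem hk' (K.inv_mem hk))
      have hqq : q' = q := inv_mul_eq_one.mp hone
      have hkk : k' = k := by
        rw [hone] at hx
        exact mul_inv_eq_one.mp hx.symm
      rw [Prod.ext_iff]
      exact ⟨Subtype.ext hqq.symm, Subtype.ext hkk.symm⟩
    · rintro ⟨x, hx⟩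
      obtain ⟨q, hq, k, hk, rfl⟩ := hx
      exact ⟨(⟨q, hq⟩, ⟨k, hk⟩), rfl⟩
  refine ⟨J, rfl, ?_, ?_⟩
  · -- J perfect → Q perfect
    intro hPJ
    apply PCAux.isPerfectCode_of_crit Q
    intro g hginv hodd
    -- the stabilizer-type subgroup
    set S₀ : Subgroup G :=
      { carrier := {u | u ∈ Q ∧ g⁻¹ * u * g ∈ Q}
        one_mem' := ⟨Q.one_mem, by simpa using Q.one_mem⟩
        mul_mem' := by
          rintro a b ⟨haQ, haC⟩ ⟨hbQ, hbC⟩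
          refine ⟨Q.mul_mem haQ hbQ, ?_⟩
          have h5 := Q.mul_mem haC hbC
          rwa [show (g⁻¹ * a * g) * (g⁻¹ * b * g) = g⁻¹ * (a * b) * g by group] at h5
        inv_mem' := by
          rintro a ⟨haQ, haC⟩
          refine ⟨Q.inv_mem haQ, ?_⟩
          have h5 := Q.inv_mem haC
          rwa [show (g⁻¹ * a * g)⁻¹ = g⁻¹ * a⁻¹ * g by group] at h5 } with hS₀def
    have hS₀Q : S₀ ≤ Q := fun u hu => hu.1
    have e0 := PCAux.ncard_sat S₀ (Q : Set G) (fun x hx h hh => Q.mul_mem hx (hS₀Q hh))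
    have eQ : (Q : Set G).ncard = Nat.card Q := by
      rw [← Nat.card_coe_set_eq]; rfl
    have ebij : (QuotientGroup.mk (s := S₀) '' (Q : Set G)).ncard
        = (QuotientGroup.mk (s := Q) '' PCAux.dc Q g).ncard := by
      rw [← Nat.card_coe_set_eq, ← Nat.card_coe_set_eq]
      apply Nat.card_congr
      refine Equiv.ofBijective (fun C => ⟨QuotientGroup.mk ((C : G ⧸ S₀).out * g), ?_⟩)
        ⟨?_, ?_⟩
      · obtain ⟨C, hC⟩ := C
        obtain ⟨u, hu, huC⟩ := hC
        have h1 : u⁻¹ * C.out ∈ S₀ := by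
          rw [← QuotientGroup.eq, huC]; exact C.out_eq'.symm
        have h2 : C.out ∈ Q := by
          have h5 := Q.mul_mem hu (hS₀Q h1)
          rwa [mul_inv_cancel_left] at h5
        exact (Set.mem_image _ _ _).mpr ⟨C.out * g, ⟨C.out, h2, 1, Q.one_mem, by group⟩, rfl⟩
      · rintro ⟨C, hC⟩ ⟨C', hC'⟩ heq
        simp only [Subtype.mk_eq_mk] at heq
        obtain ⟨u, hu, huC⟩ := hC
        obtain ⟨u', hu', huC'⟩ := hC'
        have h1 : u⁻¹ * C.out ∈ S₀ := by
          rw [← QuotientGroup.eq, huC]; exact C.out_eq'.symm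
        have h1' : u'⁻¹ * C'.out ∈ S₀ := by
          rw [← QuotientGroup.eq, huC']; exact C'.out_eq'.symm
        have h2 : C.out ∈ Q := by
          have h5 := Q.mul_mem hu (hS₀Q h1)
          rwa [mul_inv_cancel_left] at h5
        have h2' : C'.out ∈ Q := by
          have h5 := Q.mul_mem hu' (hS₀Q h1')
          rwa [mul_inv_cancel_left] at h5
        have h3 : (C.out * g)⁻¹ * (C'.out * g) ∈ Q := QuotientGroup.eq.mp heq
        have h4 : C.out⁻¹ * C'.out ∈ S₀ := by
          refine ⟨Q.mul_mem (Q.inv_mem h2) h2', ?_⟩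
          rwa [show g⁻¹ * (C.out⁻¹ * C'.out) * g = (C.out * g)⁻¹ * (C'.out * g) by group]
        apply Subtype.ext
        show C = C'
        rw [← QuotientGroup.out_eq' C, ← QuotientGroup.out_eq' C']
        exact QuotientGroup.eq.mpr h4
      · rintro ⟨E, hE⟩
        obtain ⟨x, hx, hxE⟩ := hE
        obtain ⟨h₁, h1m, h₂, h2m, rfl⟩ := hx
        refine ⟨⟨QuotientGroup.mk h₁, (Set.mem_image _ _ _).mpr ⟨h₁, h1m, rfl⟩⟩, ?_⟩
        apply Subtype.ext
        have h5 : h₁⁻¹ * (QuotientGroup.mk (s := S₀) h₁).out ∈ S₀ := by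
          rw [← QuotientGroup.eq]
          exact (QuotientGroup.out_eq' _).symm
        have h6 : ((QuotientGroup.mk (s := S₀) h₁).out * g)⁻¹ * (h₁ * g * h₂) ∈ Q := by
          have hinv := Q.inv_mem h5.2
          have h7 := Q.mul_mem hinv h2m
          rwa [show (g⁻¹ * (h₁⁻¹ * (QuotientGroup.mk (s := S₀) h₁).out) * g)⁻¹ * h₂ =
            ((QuotientGroup.mk (s := S₀) h₁).out * g)⁻¹ * (h₁ * g * h₂) by group] at h7
        show QuotientGroup.mk ((QuotientGroup.mk (s := S₀) h₁).out * g) = E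
        rw [← hxE]
        exact QuotientGroup.eq.mpr h6
    obtain ⟨kk, hkk⟩ := (IsPGroup.iff_card).mp hQ
    have hdvd : (QuotientGroup.mk (s := Q) '' PCAux.dc Q g).ncard ∣ 2 ^ kk := by
      refine ⟨Nat.card S₀, ?_⟩
      calc 2 ^ kk = Nat.card Q := hkk.symm
        _ = (Q : Set G).ncard := eQ.symm
        _ = (QuotientGroup.mk (s := S₀) '' (Q : Set G)).ncard * Nat.card S₀ := e0
        _ = (QuotientGroup.mk (s := Q) '' PCAux.dc Q g).ncard * Nat.card S₀ := by rw [ebij]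
    have hone : (QuotientGroup.mk (s := Q) '' PCAux.dc Q g).ncard = 1 := by
      obtain ⟨j, hj1, hj2⟩ := (Nat.dvd_prime_pow Nat.prime_two).mp hdvd
      have hj0 : j = 0 := by
        by_contra hne
        have heven : Even (2 ^ j) := (Nat.even_pow).mpr ⟨even_two, hne⟩
        rw [hj2] at hodd
        exact (Nat.not_even_iff_odd.mpr hodd) heven
      rw [hj2, hj0, pow_zero]
    obtain ⟨C0, hC0⟩ := Set.ncard_eq_one.mp hone
    have hmkg : QuotientGroup.mk (s := Q) g = C0 := by
      have h5 : QuotientGroup.mk (s := Q) g ∈ QuotientGroup.mk (s := Q) '' PCAux.dc Q g :=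
        (Set.mem_image _ _ _).mpr ⟨g, PCAux.self_mem_dc Q g, rfl⟩
      rw [hC0] at h5
      exact Set.mem_singleton_iff.mp h5
    have hallmk : ∀ q ∈ Q, QuotientGroup.mk (s := Q) (q * g) = QuotientGroup.mk (s := Q) g := by
      intro q hq
      have h5 : QuotientGroup.mk (s := Q) (q * g) ∈ QuotientGroup.mk (s := Q) '' PCAux.dc Q g :=
        (Set.mem_image _ _ _).mpr ⟨q * g, ⟨q, hq, 1, Q.one_mem, by group⟩, rfl⟩
      rw [hC0] at h5
      rw [Set.mem_singleton_iff.mp h5]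
      exact hmkg.symm
    have hc1 : ∀ q ∈ Q, g⁻¹ * q * g ∈ Q := by
      intro q hq
      have h5 := QuotientGroup.eq.mp (hallmk q⁻¹ (Q.inv_mem hq))
      rwa [show (q⁻¹ * g)⁻¹ * g = g⁻¹ * q * g by group] at h5
    have hc2 : ∀ q ∈ Q, g * q * g⁻¹ ∈ Q := by
      have hinj' : Function.Injective (fun u : Q => (⟨g⁻¹ * u * g, hc1 u u.2⟩ : Q)) := by
        rintro ⟨u, hu⟩ ⟨u', hu'⟩ h
        have h3 : g⁻¹ * u * g = g⁻¹ * u' * g := Subtype.ext_iff.mp h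
        apply Subtype.ext
        show u = u'
        calc u = g * (g⁻¹ * u * g) * g⁻¹ := by group
          _ = g * (g⁻¹ * u' * g) * g⁻¹ := by rw [h3]
          _ = u' := by group
      have hsurj := Finite.injective_iff_surjective.mp hinj'
      intro q hq
      obtain ⟨⟨u, hu⟩, huq⟩ := hsurj ⟨q, hq⟩
      have h3 : g⁻¹ * u * g = q := Subtype.ext_iff.mp huq
      have hval : u = g * q * g⁻¹ := by rw [← h3]; group
      rw [← hval]; exact hu
    have hg2 : g * g ∈ Q := by
      have h5 : QuotientGroup.mk (s := Q) g⁻¹ ∈ QuotientGroup.mk (s := Q) '' PCAux.dc Q g :=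
        (Set.mem_image _ _ _).mpr ⟨g⁻¹, hginv, rfl⟩
      rw [hC0] at h5
      have h6 : QuotientGroup.mk (s := Q) g⁻¹ = QuotientGroup.mk (s := Q) g :=
        (Set.mem_singleton_iff.mp h5).trans hmkg.symm
      have h7 := QuotientGroup.eq.mp h6
      rwa [inv_inv] at h7
    set V : Subgroup G := PCAux.Vsub Q g hg2 hc1 hc2 with hVdef
    have hVN : V ≤ (Subgroup.normalizer (Q : Set G)) := by
      rintro x (hx | ⟨q, hq, rfl⟩)
      · exact Subgroup.le_normalizer hx
      · rw [Subgroup.mem_normalizer_iff]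
        intro h
        constructor
        · intro hh
          have h5 : (g * q) * h * (g * q)⁻¹ = g * (q * h * q⁻¹) * g⁻¹ := by group
          rw [h5]
          exact hc2 _ (Q.mul_mem (Q.mul_mem hq hh) (Q.inv_mem hq))
        · intro hh
          have h5 : q⁻¹ * (g⁻¹ * ((g * q) * h * (g * q)⁻¹) * g) * q = h := by group
          rw [← h5]
          exact Q.mul_mem (Q.mul_mem (Q.inv_mem hq) (hc1 _ hh)) hq
    have hVP : IsPGroup 2 V := by
      rintro ⟨x, hx⟩
      have hxx : x * x ∈ Q := by
        rcases hx with hx | ⟨q, hq, rfl⟩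
        · exact Q.mul_mem hx hx
        · have h5 : g * q * (g * q) = (g * g) * (g⁻¹ * q * g) * q := by group
          rw [h5]
          exact Q.mul_mem (Q.mul_mem hg2 (hc1 q hq)) hq
      obtain ⟨n, hn⟩ := PCAux.pow_two_eq_one_of_mem hQ hxx
      refine ⟨n + 1, ?_⟩
      apply Subtype.ext
      have h5 : (x : G) ^ 2 ^ (n + 1) = (x * x) ^ 2 ^ n := by
        rw [← pow_two, ← pow_mul]
        congr 1
        rw [pow_succ]
        ring
      simpa using h5.trans hn
    have hVK : V ≤ (Subgroup.normalizer (K : Set G)) := PCAux.le_K_normalizer hSyl V hVN hVP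
    have hgV : g ∈ V := Or.inr ⟨1, Q.one_mem, (mul_one g).symm⟩
    have hgK : g ∈ (Subgroup.normalizer (K : Set G)) := hVK hgV
    have hconjKinv : ∀ k ∈ K, g⁻¹ * k * g ∈ K := by
      intro k hk
      have h5 := (Subgroup.mem_normalizer_iff.mp ((Subgroup.normalizer (K : Set G)).inv_mem hgK) k).mp hk
      rwa [inv_inv] at h5
    have hgJinv : g⁻¹ ∈ PCAux.dc J g :=
      ⟨(g * g)⁻¹, hQJ (Q.inv_mem hg2), 1, J.one_mem, by group⟩
    have hJconj : ∀ j ∈ J, g⁻¹ * j * g ∈ J := by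
      rintro j ⟨q, hqm, k, hkm, rfl⟩
      exact ⟨g⁻¹ * q * g, hc1 q hqm, g⁻¹ * k * g, hconjKinv k hkm, by group⟩
    have hJimg : QuotientGroup.mk (s := J) '' PCAux.dc J g = {QuotientGroup.mk (s := J) g} := by
      apply Set.Subset.antisymm
      · rintro C ⟨x, ⟨j₁, hj₁, j₂, hj₂, rfl⟩, rfl⟩
        simp only [Set.mem_singleton_iff]
        rw [show j₁ * g * j₂ = (j₁ * g) * j₂ by group, QuotientGroup.mk_mul_of_mem _ hj₂,
          QuotientGroup.eq]
        have h5 := hJconj j₁⁻¹ (J.inv_mem hj₁)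
        rwa [show g⁻¹ * j₁⁻¹ * g = (j₁ * g)⁻¹ * g by group] at h5
      · rintro C hC
        rw [Set.mem_singleton_iff] at hC
        rw [hC]
        exact (Set.mem_image _ _ _).mpr ⟨g, PCAux.self_mem_dc J g, rfl⟩
    obtain ⟨x, hxS, hxsq⟩ := PCAux.exists_sq_one_of_isPerfectCode J hPJ (PCAux.dc J g)
      (fun x hx h hh => PCAux.dc_mul_right hx hh)
      (by
        intro x hx
        have h1 := PCAux.inv_mem_dc_inv hx
        rwa [PCAux.dc_eq_of_mem hgJinv] at h1)
      (by rw [hJimg, Set.ncard_singleton]; exact odd_one)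
    obtain ⟨j₁, hj₁, j₂, hj₂, rfl⟩ := hxS
    have hx2 : ∃ j ∈ J, j₁ * g * j₂ = g * j :=
      ⟨(g⁻¹ * j₁ * g) * j₂, J.mul_mem (hJconj j₁ hj₁) hj₂, by group⟩
    obtain ⟨j, hj, hxj⟩ := hx2
    obtain ⟨q, hqm, k, hkm, rfl⟩ := hj
    set y : G := g * q with hy
    have hyV : y ∈ V := Or.inr ⟨q, hqm, rfl⟩
    have hy2 : y * y ∈ Q := by
      rw [hy, show g * q * (g * q) = (g * g) * (g⁻¹ * q * g) * q by group]
      exact Q.mul_mem (Q.mul_mem hg2 (hc1 q hqm)) hqm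
    have hyK : y ∈ (Subgroup.normalizer (K : Set G)) := hVK hyV
    have hyKinv : ∀ k' ∈ K, y⁻¹ * k' * y ∈ K := by
      intro k' hk'
      have h5 := (Subgroup.mem_normalizer_iff.mp ((Subgroup.normalizer (K : Set G)).inv_mem hyK) k').mp hk'
      rwa [inv_inv] at h5
    have hk1 : (y⁻¹ * k * y) * k ∈ K := K.mul_mem (hyKinv k hkm) hkm
    have hxsq' : (y * k) * (y * k) = 1 := by
      rw [hy]
      rw [hxj] at hxsq
      rw [show g * q * k = g * (q * k) by group]
      rwa [show g * (q * k) * (g * (q * k)) = g * (q * k) * (g * (q * k)) by rfl] at hxsq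
    have hyy : y * y = ((y⁻¹ * k * y) * k)⁻¹ := by
      apply eq_inv_of_mul_eq_one_left
      rw [show y * y * ((y⁻¹ * k * y) * k) = (y * k) * (y * k) by group]
      exact hxsq'
    have hyyK : y * y ∈ K := hyy ▸ K.inv_mem hk1
    exact ⟨y, ⟨1, Q.one_mem, q, hqm, by rw [hy]; group⟩, htriv _ hy2 hyyK⟩
  · -- Q perfect → J perfect
    intro hPQ
    apply PCAux.isPerfectCode_of_crit J
    intro g hginv hodd
    have hsatQ : ∀ x ∈ PCAux.dc J g, ∀ h ∈ Q, x * h ∈ PCAux.dc J g :=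
      fun x hx h hh => PCAux.dc_mul_right hx (hQJ hh)
    have e1 := PCAux.ncard_sat Q (PCAux.dc J g) hsatQ
    have e2 := PCAux.ncard_sat J (PCAux.dc J g) (fun x hx h hh => PCAux.dc_mul_right hx hh)
    have hQpos : 0 < Nat.card Q := Nat.card_pos
    have hnn : (QuotientGroup.mk (s := Q) '' PCAux.dc J g).ncard
        = (QuotientGroup.mk (s := J) '' PCAux.dc J g).ncard * Nat.card K := by
      apply Nat.eq_of_mul_eq_mul_right hQpos
      rw [← e1, e2, hcardJ]
      ring
    refine PCAux.exists_sq_one_of_isPerfectCode Q hPQ (PCAux.dc J g) hsatQ ?_ ?_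
    · intro x hx
      have h1 := PCAux.inv_mem_dc_inv hx
      rwa [PCAux.dc_eq_of_mem hginv] at h1
    · rw [hnn]
      exact hodd.mul hK
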